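/- Let Φ be a Leonard system with associated monic polynomials p_i (satisfying p_0 = 1, λp_i = p_{i+1} + a_i p_i + x_i p_{i−1}). Then for 0 ≤ i ≤ d: p_i(A) E*_0 = E*_i A^i E*_0, and moreover E*_i = p_i(A) E*_0 p_i(A) / (x_1 x_2 ⋯ x_i). -/

import Mathlib

/-!
Since `E*_0, …, E*_d` are `d + 1` nonzero orthogonal idempotents in `Mat_{d+1}(K)`, each has rank
one, so `E*_i M E*_i = tr (E*_i M) E*_i` for every `M`; in particular `E*_i A E*_i = a_i E*_i` and
`E*_{i-1} A E*_i A E*_{i-1} = x_i E*_{i-1}`. As `A` is tridiagonal with respect to the `E*_i`,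
these identities make `E*_i A^i E*_0` satisfy the three-term recurrence of `p_i`, whence
`p_i(A) E*_0 = E*_i A^i E*_0`; in the opposite ring the same argument gives
`E*_0 p_i(A) = E*_0 A^i E*_i`. Multiplying the two, `p_i(A) E*_0 p_i(A) = x_1 ⋯ x_i E*_i` by
induction on `i`, and `x_i ≠ 0` because `E*_i A E*_{i-1}` and `E*_{i-1} A E*_i` are nonzero
rank-one matrices.
-/

open Matrix Polynomial

def IsTridiag {K : Type*} [Field K] {n : ℕ} (M : Matrix (Fin n) (Fin n) K) : Prop :=
  ∀ i j : Fin n, ((i : ℕ) + 1 < j ∨ (j : ℕ) + 1 < i) → M i j = 0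

def IsIrredTridiag {K : Type*} [Field K] {n : ℕ} (M : Matrix (Fin n) (Fin n) K) : Prop :=
  IsTridiag M ∧ ∀ i j : Fin n, ((i : ℕ) + 1 = j ∨ (j : ℕ) + 1 = i) → M i j ≠ 0

/-- Entry of a matrix with natural-number indices; `0` when out of range. -/
def mentry {K : Type*} [Field K] {n : ℕ} (M : Matrix (Fin n) (Fin n) K) (i j : ℕ) : K :=
  if h : i < n ∧ j < n then M ⟨i, h.1⟩ ⟨j, h.2⟩ else 0

/-- A family indexed by `Fin (d+1)` viewed as indexed by `ℕ`, with value `0` out of range. -/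
def natIdx {d : ℕ} {M : Type*} [Zero M] (E : Fin (d+1) → M) (n : ℕ) : M :=
  if h : n < d + 1 then E ⟨n, h⟩ else 0

/-- A Leonard system of diameter `d` in the matrix algebra `Mat_{d+1}(K)`:
`A`, `As` are multiplicity-free with eigenvalues `θ i`, `θs i` and primitive
idempotents `E i`, `Es i`, satisfying the tridiagonal conditions. -/
structure LeonardSystem (K : Type*) [Field K] (d : ℕ) where
  A : Matrix (Fin (d+1)) (Fin (d+1)) K
  As : Matrix (Fin (d+1)) (Fin (d+1)) K
  E : Fin (d+1) → Matrix (Fin (d+1)) (Fin (d+1)) K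
  Es : Fin (d+1) → Matrix (Fin (d+1)) (Fin (d+1)) K
  θ : Fin (d+1) → K
  θs : Fin (d+1) → K
  θ_inj : Function.Injective θ
  θs_inj : Function.Injective θs
  E_ne : ∀ i, E i ≠ 0
  Es_ne : ∀ i, Es i ≠ 0
  E_mul : ∀ i j, E i * E j = if i = j then E i else 0
  Es_mul : ∀ i j, Es i * Es j = if i = j then Es i else 0
  E_sum : ∑ i, E i = 1
  Es_sum : ∑ i, Es i = 1
  A_eq : A = ∑ i, θ i • E i
  As_eq : As = ∑ i, θs i • Es i
  EAsE_zero : ∀ i j : Fin (d+1), ((i:ℕ) + 1 < j ∨ (j:ℕ) + 1 < i) → E i * As * E j = 0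
  EAsE_ne : ∀ i j : Fin (d+1), ((i:ℕ) + 1 = j ∨ (j:ℕ) + 1 = i) → E i * As * E j ≠ 0
  EsAEs_zero : ∀ i j : Fin (d+1), ((i:ℕ) + 1 < j ∨ (j:ℕ) + 1 < i) → Es i * A * Es j = 0
  EsAEs_ne : ∀ i j : Fin (d+1), ((i:ℕ) + 1 = j ∨ (j:ℕ) + 1 = i) → Es i * A * Es j ≠ 0

/-- A Leonard pair in `Mat_{d+1}(K)`. -/
structure LeonardPair (K : Type*) [Field K] (d : ℕ) where
  A : Matrix (Fin (d+1)) (Fin (d+1)) K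
  As : Matrix (Fin (d+1)) (Fin (d+1)) K
  cond1 : ∃ P : Matrix (Fin (d+1)) (Fin (d+1)) K, IsUnit P ∧
    IsIrredTridiag (P⁻¹ * A * P) ∧ (P⁻¹ * As * P).IsDiag
  cond2 : ∃ P : Matrix (Fin (d+1)) (Fin (d+1)) K, IsUnit P ∧
    (P⁻¹ * A * P).IsDiag ∧ IsIrredTridiag (P⁻¹ * As * P)

namespace Matrix

section vecMulVec

variable {R n : Type*} [CommSemiring R] [Fintype n]

theorem vecMulVec_mul_mul_vecMulVec (v w v' w' : n → R) (M : Matrix n n R) :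
    vecMulVec v w * M * vecMulVec v' w' = (w ⬝ᵥ M *ᵥ v') • vecMulVec v w' := by
  rw [Matrix.mul_assoc, mul_vecMulVec, vecMulVec_mul_vecMulVec, vecMulVec_smul]

theorem trace_vecMulVec_mul (v w : n → R) (M : Matrix n n R) :
    trace (vecMulVec v w * M) = w ⬝ᵥ M *ᵥ v := by
  rw [vecMulVec_mul, trace_vecMulVec, dotProduct_comm, ← dotProduct_mulVec]

theorem vecMulVec_mul_mul_vecMulVec_self (v w : n → R) (M : Matrix n n R) :
    vecMulVec v w * M * vecMulVec v w = trace (vecMulVec v w * M) • vecMulVec v w := by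
  rw [vecMulVec_mul_mul_vecMulVec, trace_vecMulVec_mul]

theorem trace_vecMulVec_mul_vecMulVec_mul_ne_zero [NoZeroDivisors R] {v w v' w' : n → R}
    {M : Matrix n n R} (h : vecMulVec v w * M * vecMulVec v' w' ≠ 0)
    (h' : vecMulVec v' w' * M * vecMulVec v w ≠ 0) :
    trace (vecMulVec v w * M * vecMulVec v' w' * M) ≠ 0 := by
  rw [vecMulVec_mul_mul_vecMulVec] at h h' ⊢
  rw [smul_mul_assoc, trace_smul, trace_vecMulVec_mul, smul_eq_mul]
  exact mul_ne_zero (left_ne_zero_of_smul h) (left_ne_zero_of_smul h')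

end vecMulVec

theorem exists_eq_vecMulVec_of_rank_le_one {K n : Type*} [Field K] [Fintype n]
    {E : Matrix n n K} (h : E.rank ≤ 1) : ∃ v w : n → K, E = vecMulVec v w := by
  classical
  obtain ⟨⟨v, _⟩, hv⟩ := finrank_le_one_iff.mp h
  choose w hw using fun j : n => hv ⟨E *ᵥ Pi.single j 1, Pi.single j 1, rfl⟩
  refine ⟨v, w, ext fun k j => ?_⟩
  simpa [mulVec_single, mul_comm, vecMulVec_apply] using
    (congrFun (congrArg Subtype.val (hw j)) k).symm

end Matrix

theorem OrthogonalIdempotents.matrix_rank_le_one {K n : Type*} [Field K] [Fintype n]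
    [DecidableEq n] {E : n → Matrix n n K} (hE : OrthogonalIdempotents E) (hne : ∀ i, E i ≠ 0)
    (i : n) : (E i).rank ≤ 1 := by
  set V : n → Submodule K (n → K) := fun j => LinearMap.range (E j).mulVecLin
  have hpos (j : n) : 1 ≤ Module.finrank K (V j) := by
    rw [Nat.one_le_iff_ne_zero, Ne, Submodule.finrank_eq_zero, LinearMap.range_eq_bot]
    intro h
    refine hne j (ext fun k l => ?_)
    simpa [mulVec_single] using congrFun (LinearMap.congr_fun h (Pi.single l 1)) k
  have hproj (j k : n) (y : V k) : E j *ᵥ (y : n → K) = if k = j then y else 0 := by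
    obtain ⟨_, z, rfl⟩ := y
    simp only [mulVecLin_apply, mulVec_mulVec, hE.mul_eq]
    split_ifs <;> simp_all
  -- the ranges are independent, so their dimensions add up to at most `card n`
  have hsum : ∑ j, Module.finrank K (V j) ≤ Fintype.card n := by
    rw [← Module.finrank_pi_fintype, ← Module.finrank_fintype_fun_eq_card K]
    refine LinearMap.finrank_le_finrank_of_injective
      (f := LinearMap.lsum K (fun j => V j) K fun j => (V j).subtype) ?_
    rw [← LinearMap.ker_eq_bot, LinearMap.ker_eq_bot']
    intro y hy
    funext j
    simpa [mulVec_sum, hproj, apply_ite Subtype.val] using congrArg (E j *ᵥ ·) hy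
  by_contra! h
  have := Finset.sum_lt_sum (s := Finset.univ) (fun j _ => hpos j) ⟨i, Finset.mem_univ _, h⟩
  simp only [Finset.sum_const, Finset.card_univ, smul_eq_mul, mul_one] at this
  omega

section natIdx

variable {M : Type*} {d : ℕ}

theorem natIdx_of_lt_succ [Zero M] {E : Fin (d + 1) → M} {n : ℕ} (hn : n < d + 1) :
    natIdx E n = E ⟨n, hn⟩ :=
  dif_pos hn

theorem natIdx_of_lt [Zero M] {E : Fin (d + 1) → M} {n : ℕ} (hn : d < n) : natIdx E n = 0 :=
  dif_neg (by omega)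

@[simp]
theorem natIdx_val [Zero M] (E : Fin (d + 1) → M) (i : Fin (d + 1)) : natIdx E i = E i :=
  natIdx_of_lt_succ i.isLt

@[simp]
theorem natIdx_zero [Zero M] (E : Fin (d + 1) → M) : natIdx E 0 = E 0 :=
  natIdx_val E 0

theorem sum_range_natIdx [AddCommMonoid M] (E : Fin (d + 1) → M) :
    ∑ n ∈ Finset.range (d + 1), natIdx E n = ∑ i, E i := by
  simp [← Fin.sum_univ_eq_sum_range]

theorem OrthogonalIdempotents.natIdx [Semiring M] {E : Fin (d + 1) → M}
    (hE : OrthogonalIdempotents E) :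
    OrthogonalIdempotents (natIdx E) := by
  classical
  refine OrthogonalIdempotents.iff_mul_eq.mpr fun i j => ?_
  rcases lt_or_ge d i with hi | hi
  · simp [natIdx_of_lt hi]
  rcases lt_or_ge d j with hj | hj
  · simp [natIdx_of_lt hj, show i ≠ j by omega]
  simp [natIdx_of_lt_succ (Nat.lt_succ_of_le hi), natIdx_of_lt_succ (Nat.lt_succ_of_le hj),
    hE.mul_eq]

end natIdx

section Tridiagonal

open Finset MulOpposite

variable {R : Type*} [Ring R]

-- Indexed by `ℕ`, so that the neighbours `F (i - 1)`, `F (i + 1)` need no bounds checks;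
-- `F i = 0` for `i > d` (`IsTridiagonalOn.eq_zero_of_lt`).
structure IsTridiagonalOn (A : R) (F : ℕ → R) (d : ℕ) : Prop where
  orthogonalIdempotents : OrthogonalIdempotents F
  sum_range_eq_one : ∑ i ∈ range (d + 1), F i = 1
  mul_mul_eq_zero : ∀ i j, i + 1 < j ∨ j + 1 < i → F i * A * F j = 0

namespace IsTridiagonalOn

variable {A : R} {F : ℕ → R} {d : ℕ}

theorem eq_zero_of_lt (h : IsTridiagonalOn A F d) {i : ℕ} (hi : d < i) : F i = 0 := by
  rw [← mul_one (F i), ← h.sum_range_eq_one,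
    h.orthogonalIdempotents.mul_sum_of_notMem (by simpa using hi)]

theorem op (h : IsTridiagonalOn A F d) : IsTridiagonalOn (op A) (fun i => op (F i)) d where
  orthogonalIdempotents :=
    ⟨fun i => by rw [IsIdempotentElem, ← op_mul, (h.orthogonalIdempotents.idem i).eq],
      fun i j hij => by simp only [← op_mul, h.orthogonalIdempotents.ortho hij.symm, op_zero]⟩
  sum_range_eq_one := by rw [← op_sum, h.sum_range_eq_one, op_one]
  mul_mul_eq_zero i j hij := by
    rw [← op_mul, ← op_mul, ← mul_assoc, h.mul_mul_eq_zero j i hij.symm, op_zero]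

theorem mul_eq_sum (h : IsTridiagonalOn A F d) (n : ℕ) :
    A * F n = ∑ j ∈ Icc (n - 1) (n + 1), F j * A * F n := by
  calc A * F n = ∑ j ∈ range (d + 1), F j * A * F n := by
        simp only [mul_assoc, ← sum_mul, h.sum_range_eq_one, one_mul]
    _ = ∑ j ∈ range (d + 1) ∪ Icc (n - 1) (n + 1), F j * A * F n :=
        sum_subset subset_union_left fun j hj hj' => by
          rw [h.eq_zero_of_lt (by simp_all), zero_mul, zero_mul]
    _ = ∑ j ∈ Icc (n - 1) (n + 1), F j * A * F n :=
        (sum_subset subset_union_right fun j _ hj => h.mul_mul_eq_zero j n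
          (by simp only [mem_Icc] at hj; omega)).symm

theorem mul_eq_sum' (h : IsTridiagonalOn A F d) (n : ℕ) :
    F n * A = ∑ j ∈ Icc (n - 1) (n + 1), F n * A * F j := by
  apply op_injective
  simpa [← op_mul, mul_assoc] using h.op.mul_eq_sum n

theorem mul_pow_mul_eq_zero (h : IsTridiagonalOn A F d) {k j : ℕ} (hkj : k < j) :
    F j * A ^ k * F 0 = 0 := by
  induction k generalizing j with
  | zero => simpa using h.orthogonalIdempotents.ortho (by omega : j ≠ 0)
  | succ k ih =>
    rw [pow_succ', ← mul_assoc, h.mul_eq_sum', sum_mul, sum_mul]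
    refine sum_eq_zero fun l hl => ?_
    rw [mul_assoc, mul_assoc, ← mul_assoc (F l), ih (by simp only [mem_Icc] at hl; omega),
      mul_zero]

theorem mul_pow_succ_mul (h : IsTridiagonalOn A F d) (n : ℕ) :
    F (n + 1) * A ^ (n + 1) * F 0 = F (n + 1) * A * (F n * A ^ n * F 0) := by
  conv_lhs => rw [pow_succ', ← mul_assoc, h.mul_eq_sum', sum_mul, sum_mul]
  rw [sum_eq_single_of_mem n (by simp; omega)]
  · simp only [mul_assoc]
  · intro l hl hln
    rw [mul_assoc, mul_assoc, ← mul_assoc (F l),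
      h.mul_pow_mul_eq_zero (by simp only [mem_Icc] at hl; omega), mul_zero]

theorem mul_pow_succ_mul' (h : IsTridiagonalOn A F d) (n : ℕ) :
    F 0 * A ^ (n + 1) * F (n + 1) = F 0 * A ^ n * F n * A * F (n + 1) := by
  apply op_injective
  simpa [← op_mul, ← op_pow, mul_assoc] using h.op.mul_pow_succ_mul n

variable {K : Type*} [CommRing K] [Algebra K R] {a x : ℕ → K}

theorem mul_mul_pow_mul (h : IsTridiagonalOn A F d) (ha : ∀ i ≤ d, F i * A * F i = a i • F i)
    (hx : ∀ i < d, F i * A * F (i + 1) * A * F i = x (i + 1) • F i) (hx0 : x 0 = 0) {n : ℕ}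
    (hn : n ≤ d) :
    A * (F n * A ^ n * F 0) = F (n + 1) * A ^ (n + 1) * F 0 + a n • (F n * A ^ n * F 0) +
      x n • (F (n - 1) * A ^ (n - 1) * F 0) := by
  have above (m : ℕ) : F (m + 1) * A * F m * (A ^ m * F 0) = F (m + 1) * A ^ (m + 1) * F 0 := by
    rw [h.mul_pow_succ_mul]; simp only [mul_assoc]
  have diag (m : ℕ) (hm : m ≤ d) :
      F m * A * F m * (A ^ m * F 0) = a m • (F m * A ^ m * F 0) := by
    rw [ha m hm, smul_mul_assoc, mul_assoc]
  have below (m : ℕ) (hm : m < d) :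
      F m * A * F (m + 1) * (A ^ (m + 1) * F 0) = x (m + 1) • (F m * A ^ m * F 0) := by
    calc F m * A * F (m + 1) * (A ^ (m + 1) * F 0)
        = F m * A * (F (m + 1) * A ^ (m + 1) * F 0) := by simp only [mul_assoc]
      _ = F m * A * F (m + 1) * A * F m * (A ^ m * F 0) := by
        rw [h.mul_pow_succ_mul]; simp only [mul_assoc]
      _ = x (m + 1) • (F m * A ^ m * F 0) := by rw [hx m hm, smul_mul_assoc, mul_assoc]
  rw [show A * (F n * A ^ n * F 0) = A * F n * (A ^ n * F 0) by simp only [mul_assoc],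
    h.mul_eq_sum, sum_mul]
  rcases n with _ | m
  · rw [zero_add, Nat.zero_sub, sum_Icc_succ_top zero_le_one, Icc_self, sum_singleton, diag 0 hn,
      above, hx0, zero_smul, add_zero, add_comm]
  · rw [Nat.add_sub_cancel, sum_Icc_succ_top (by omega), sum_Icc_succ_top (by omega), Icc_self,
      sum_singleton, below m hn, diag (m + 1) hn, above]
    abel

theorem aeval_mul (h : IsTridiagonalOn A F d) (ha : ∀ i ≤ d, F i * A * F i = a i • F i)
    (hx : ∀ i < d, F i * A * F (i + 1) * A * F i = x (i + 1) • F i) (hx0 : x 0 = 0)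
    {p : ℕ → K[X]} (hp0 : p 0 = 1)
    (hrec : ∀ i < d, X * p i = p (i + 1) + C (a i) * p i + C (x i) * p (i - 1)) {n : ℕ}
    (hn : n ≤ d) : aeval A (p n) * F 0 = F n * A ^ n * F 0 := by
  induction n using Nat.strong_induction_on with
  | _ n ih =>
    rcases n with _ | k
    · rw [hp0, map_one, one_mul, pow_zero, mul_one, (h.orthogonalIdempotents.idem 0).eq]
    · have hpk : p (k + 1) = X * p k - C (a k) * p k - C (x k) * p (k - 1) := by
        rw [hrec k hn]; ring
      calc aeval A (p (k + 1)) * F 0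
          = A * (aeval A (p k) * F 0) - a k • (aeval A (p k) * F 0) -
              x k • (aeval A (p (k - 1)) * F 0) := by
            simp only [hpk, map_sub, map_mul, aeval_X, aeval_C, sub_mul, ← Algebra.smul_def,
              smul_mul_assoc, mul_assoc]
        _ = F (k + 1) * A ^ (k + 1) * F 0 := by
          rw [ih k (by omega) (by omega), ih (k - 1) (by omega) (by omega),
            h.mul_mul_pow_mul ha hx hx0 (by omega)]
          abel

theorem mul_aeval (h : IsTridiagonalOn A F d) (ha : ∀ i ≤ d, F i * A * F i = a i • F i)
    (hx : ∀ i < d, F i * A * F (i + 1) * A * F i = x (i + 1) • F i) (hx0 : x 0 = 0)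
    {p : ℕ → K[X]} (hp0 : p 0 = 1)
    (hrec : ∀ i < d, X * p i = p (i + 1) + C (a i) * p i + C (x i) * p (i - 1)) {n : ℕ}
    (hn : n ≤ d) : F 0 * aeval A (p n) = F 0 * A ^ n * F n := by
  have ha' (i : ℕ) (hi : i ≤ d) : MulOpposite.op (F i) * MulOpposite.op A *
      MulOpposite.op (F i) = a i • MulOpposite.op (F i) := by
    simp only [← op_mul, ← op_smul, ← ha i hi, mul_assoc]
  have hx' (i : ℕ) (hi : i < d) : MulOpposite.op (F i) * MulOpposite.op A *
      MulOpposite.op (F (i + 1)) * MulOpposite.op A * MulOpposite.op (F i) =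
        x (i + 1) • MulOpposite.op (F i) := by
    simp only [← op_mul, ← op_smul, ← hx i hi, mul_assoc]
  apply op_injective
  simpa [← op_mul, ← op_pow, aeval_op_apply, mul_assoc] using
    h.op.aeval_mul ha' hx' hx0 hp0 hrec hn

theorem mul_pow_mul_mul_mul_pow_mul (h : IsTridiagonalOn A F d)
    (hx : ∀ i < d, F (i + 1) * A * F i * A * F (i + 1) = x (i + 1) • F (i + 1)) {n : ℕ}
    (hn : n ≤ d) :
    F n * A ^ n * F 0 * (F 0 * A ^ n * F n) = (∏ i ∈ Icc 1 n, x i) • F n := by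
  induction n with
  | zero => simp [(h.orthogonalIdempotents.idem 0).eq]
  | succ n ih =>
    calc F (n + 1) * A ^ (n + 1) * F 0 * (F 0 * A ^ (n + 1) * F (n + 1))
        = F (n + 1) * A * (F n * A ^ n * F 0 * (F 0 * A ^ n * F n)) * A * F (n + 1) := by
          rw [h.mul_pow_succ_mul, h.mul_pow_succ_mul']; simp only [mul_assoc]
      _ = (∏ i ∈ Icc 1 n, x i) • (F (n + 1) * A * F n * A * F (n + 1)) := by
          rw [ih (by omega)]; simp only [mul_smul_comm, smul_mul_assoc, mul_assoc]
      _ = (∏ i ∈ Icc 1 (n + 1), x i) • F (n + 1) := by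
          rw [hx n hn, smul_smul, prod_Icc_succ_top (by omega)]

theorem aeval_mul_mul_aeval (h : IsTridiagonalOn A F d)
    (ha : ∀ i ≤ d, F i * A * F i = a i • F i)
    (hx : ∀ i < d, F i * A * F (i + 1) * A * F i = x (i + 1) • F i)
    (hx' : ∀ i < d, F (i + 1) * A * F i * A * F (i + 1) = x (i + 1) • F (i + 1)) (hx0 : x 0 = 0)
    {p : ℕ → K[X]} (hp0 : p 0 = 1)
    (hrec : ∀ i < d, X * p i = p (i + 1) + C (a i) * p i + C (x i) * p (i - 1)) {n : ℕ}
    (hn : n ≤ d) : aeval A (p n) * F 0 * aeval A (p n) = (∏ i ∈ Icc 1 n, x i) • F n := by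
  rw [← (h.orthogonalIdempotents.idem 0).eq, ← mul_assoc, mul_assoc _ (F 0),
    h.aeval_mul ha hx hx0 hp0 hrec hn, h.mul_aeval ha hx hx0 hp0 hrec hn,
    h.mul_pow_mul_mul_mul_pow_mul hx' hn]

end IsTridiagonalOn

end Tridiagonal

namespace LeonardSystem

variable {K : Type*} [Field K] {d : ℕ} (L : LeonardSystem K d)

-- The paper's `a_i` and `x_i`; truncated subtraction makes `L.x 0` differ from `x_0 = 0`.
def a (n : ℕ) : K := trace (natIdx L.Es n * L.A)

def x (n : ℕ) : K := trace (natIdx L.Es n * L.A * natIdx L.Es (n - 1) * L.A)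

theorem completeOrthogonalIdempotents_Es : CompleteOrthogonalIdempotents L.Es :=
  ⟨OrthogonalIdempotents.iff_mul_eq.mpr L.Es_mul, L.Es_sum⟩

theorem exists_Es_eq_vecMulVec (i : Fin (d + 1)) : ∃ v w, L.Es i = vecMulVec v w :=
  exists_eq_vecMulVec_of_rank_le_one
    (L.completeOrthogonalIdempotents_Es.toOrthogonalIdempotents.matrix_rank_le_one L.Es_ne i)

theorem isTridiagonalOn : IsTridiagonalOn L.A (natIdx L.Es) d where
  orthogonalIdempotents := L.completeOrthogonalIdempotents_Es.toOrthogonalIdempotents.natIdx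
  sum_range_eq_one := by rw [sum_range_natIdx, L.Es_sum]
  mul_mul_eq_zero i j hij := by
    rcases lt_or_ge d i with hi | hi
    · rw [natIdx_of_lt hi, zero_mul, zero_mul]
    rcases lt_or_ge d j with hj | hj
    · rw [natIdx_of_lt hj, mul_zero]
    rw [natIdx_of_lt_succ (Nat.lt_succ_of_le hi), natIdx_of_lt_succ (Nat.lt_succ_of_le hj)]
    exact L.EsAEs_zero _ _ hij

theorem Es_mul_mul_Es (n : ℕ) (M : Matrix (Fin (d + 1)) (Fin (d + 1)) K) :
    natIdx L.Es n * M * natIdx L.Es n = trace (natIdx L.Es n * M) • natIdx L.Es n := by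
  rcases lt_or_ge d n with hn | hn
  · simp [natIdx_of_lt hn]
  obtain ⟨v, w, hvw⟩ := L.exists_Es_eq_vecMulVec ⟨n, Nat.lt_succ_of_le hn⟩
  rw [natIdx_of_lt_succ (Nat.lt_succ_of_le hn), hvw, vecMulVec_mul_mul_vecMulVec_self]

theorem Es_mul_A_mul_Es (n : ℕ) : natIdx L.Es n * L.A * natIdx L.Es n = L.a n • natIdx L.Es n :=
  L.Es_mul_mul_Es n L.A

theorem Es_mul_A_mul_Es_succ_mul_A_mul_Es (n : ℕ) :
    natIdx L.Es n * L.A * natIdx L.Es (n + 1) * L.A * natIdx L.Es n =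
      L.x (n + 1) • natIdx L.Es n := by
  have h := L.Es_mul_mul_Es n (L.A * natIdx L.Es (n + 1) * L.A)
  rw [x, Nat.add_sub_cancel, mul_assoc (natIdx L.Es (n + 1) * L.A), trace_mul_comm]
  simp only [mul_assoc] at h ⊢
  exact h

theorem Es_succ_mul_A_mul_Es_mul_A_mul_Es_succ (n : ℕ) :
    natIdx L.Es (n + 1) * L.A * natIdx L.Es n * L.A * natIdx L.Es (n + 1) =
      L.x (n + 1) • natIdx L.Es (n + 1) := by
  have h := L.Es_mul_mul_Es (n + 1) (L.A * natIdx L.Es n * L.A)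
  rw [x, Nat.add_sub_cancel]
  simp only [mul_assoc] at h ⊢
  exact h

theorem trace_Es_mul_A_mul_Es_mul_A_ne_zero {i j : Fin (d + 1)} (hij : (i : ℕ) + 1 = j) :
    trace (L.Es j * L.A * L.Es i * L.A) ≠ 0 := by
  obtain ⟨v, w, hvw⟩ := L.exists_Es_eq_vecMulVec j
  obtain ⟨v', w', hvw'⟩ := L.exists_Es_eq_vecMulVec i
  have h := L.EsAEs_ne j i (.inr hij)
  have h' := L.EsAEs_ne i j (.inl hij)
  rw [hvw, hvw'] at h h' ⊢
  exact trace_vecMulVec_mul_vecMulVec_mul_ne_zero h h'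

theorem x_ne_zero {n : ℕ} (h1 : 1 ≤ n) (hn : n ≤ d) : L.x n ≠ 0 := by
  obtain ⟨m, rfl⟩ := Nat.exists_eq_add_of_le' h1
  rw [x, Nat.add_sub_cancel, natIdx_of_lt_succ (by omega), natIdx_of_lt_succ (by omega)]
  exact L.trace_Es_mul_A_mul_Es_mul_A_ne_zero (i := ⟨m, by omega⟩) rfl

end LeonardSystem

theorem stmt12 {K : Type*} [Field K] {d : ℕ} (L : LeonardSystem K d)
    (a x : ℕ → K)
    (ha : ∀ i : Fin (d+1), a (i:ℕ) = Matrix.trace (L.Es i * L.A))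
    (hx0 : x 0 = 0)
    (hx : ∀ i : Fin (d+1), 1 ≤ (i:ℕ) →
      x (i:ℕ) = Matrix.trace (L.Es i * L.A * natIdx L.Es ((i:ℕ) - 1) * L.A))
    (p : ℕ → Polynomial K) (hp0 : p 0 = 1)
    (hrec : ∀ i : ℕ, i ≤ d →
      Polynomial.X * p i = p (i+1) + Polynomial.C (a i) * p i + Polynomial.C (x i) * p (i-1))
    :
    ∀ i : Fin (d+1),
      (Polynomial.aeval L.A) (p (i:ℕ)) * L.Es 0 = L.Es i * L.A ^ (i:ℕ) * L.Es 0 ∧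
      L.Es i = (∏ h ∈ Finset.Icc 1 (i:ℕ), x h)⁻¹ •
        ((Polynomial.aeval L.A) (p (i:ℕ)) * L.Es 0 * (Polynomial.aeval L.A) (p (i:ℕ))) := by
  have ha' (n : ℕ) (hn : n ≤ d) : a n = L.a n := by
    rw [LeonardSystem.a, natIdx_of_lt_succ (Nat.lt_succ_of_le hn)]
    exact ha ⟨n, _⟩
  have hx' (n : ℕ) (h1 : 1 ≤ n) (hn : n ≤ d) : x n = L.x n := by
    rw [LeonardSystem.x, natIdx_of_lt_succ (Nat.lt_succ_of_le hn)]
    exact hx ⟨n, _⟩ h1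
  have hdiag (n : ℕ) (hn : n ≤ d) := ha' n hn ▸ L.Es_mul_A_mul_Es n
  have hup (n : ℕ) (hn : n < d) :=
    hx' (n + 1) (Nat.le_add_left 1 n) hn ▸ L.Es_mul_A_mul_Es_succ_mul_A_mul_Es n
  have hdown (n : ℕ) (hn : n < d) :=
    hx' (n + 1) (Nat.le_add_left 1 n) hn ▸ L.Es_succ_mul_A_mul_Es_mul_A_mul_Es_succ n
  have hrec' (n : ℕ) (hn : n < d) := hrec n hn.le
  intro i
  have hp := L.isTridiagonalOn.aeval_mul hdiag hup hx0 hp0 hrec' i.is_le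
  have hpp := L.isTridiagonalOn.aeval_mul_mul_aeval hdiag hup hdown hx0 hp0 hrec' i.is_le
  simp only [natIdx_val, natIdx_zero] at hp hpp
  have hprod : ∏ h ∈ Finset.Icc 1 (i : ℕ), x h ≠ 0 := by
    refine Finset.prod_ne_zero_iff.mpr fun k hk => ?_
    obtain ⟨h1, hk⟩ := Finset.mem_Icc.mp hk
    exact hx' k h1 (hk.trans i.is_le) ▸ L.x_ne_zero h1 (hk.trans i.is_le)
  exact ⟨hp, by rw [hpp, smul_smul, inv_mul_cancel₀ hprod, one_smul]⟩
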